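/- Let G=(A,B,E) be a bipartite graph and let n_A, n_B, n_AB be the numbers of type A, type B, and type AB pendant blocks of G, respectively. Then R(Λ(G)) = n_A + n_B + n_AB − 2·M(Λ(G)), and M(Λ(G)) = α + β + γ, where α = min{n_A, n_B}, β = min{|n_A − n_B|, n_AB}, and γ = ⌊(n_AB − β)/2⌋. -/

import Mathlib

open SimpleGraph

namespace AugBic

noncomputable section

variable {V : Type*}

/-- Two vertices are biconnected: they are in the same connected component and remain so
after the removal of any single edge or any single vertex other than either of them. -/
def BiconnPair (G : SimpleGraph V) (u v : V) : Prop :=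
  G.Reachable u v ∧
  (∀ e ∈ G.edgeSet, (G.deleteEdges {e}).Reachable u v) ∧
  (∀ w : V, ∀ hu : u ≠ w, ∀ hv : v ≠ w,
    (G.induce {x | x ≠ w}).Reachable ⟨u, hu⟩ ⟨v, hv⟩)

/-- A set of vertices is biconnected if every pair of its vertices is biconnected. -/
def BiconnSet (G : SimpleGraph V) (S : Set V) : Prop :=
  ∀ u ∈ S, ∀ v ∈ S, BiconnPair G u v

/-- A block: (the induced subgraph on) a maximal biconnected set of vertices. -/
def IsBlock (G : SimpleGraph V) (S : Set V) : Prop :=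
  S.Nonempty ∧ BiconnSet G S ∧ ∀ T : Set V, S ⊆ T → BiconnSet G T → T = S

/-- A cut vertex: its removal increases the number of connected components. -/
def IsCutVertex (G : SimpleGraph V) (v : V) : Prop :=
  Nat.card G.ConnectedComponent <
    Nat.card ((G.induce {x | x ≠ v}).ConnectedComponent)

/-- A cut edge: its removal increases the number of connected components. -/
def IsCutEdge (G : SimpleGraph V) (e : Sym2 V) : Prop :=
  e ∈ G.edgeSet ∧
    Nat.card G.ConnectedComponent <
      Nat.card ((G.deleteEdges {e}).ConnectedComponent)

/-- A pendant block: a singular block consisting of a vertex of degree 1, or a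
nonsingular block containing exactly one cut vertex. -/
def IsPendantBlock (G : SimpleGraph V) (S : Set V) : Prop :=
  IsBlock G S ∧
    ((∃ v, S = {v} ∧ (G.neighborSet v).ncard = 1) ∨
     (1 < S.ncard ∧ ∃! v, v ∈ S ∧ IsCutVertex G v))

/-- Λ(G): the set of pendant blocks of `G`. -/
def pendantBlocks (G : SimpleGraph V) : Set (Set V) :=
  {S | IsPendantBlock G S}

/-- A block is of type `P` (for `P = A` or `P = B`) if all its noncut vertices lie in `P`. -/
def TypeOnly (G : SimpleGraph V) (P : Set V) (S : Set V) : Prop :=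
  ∀ v ∈ S, ¬IsCutVertex G v → v ∈ P

/-- A block is type AB if it has a noncut vertex in `A` and a noncut vertex in `B`. -/
def TypeAB (G : SimpleGraph V) (A B : Set V) (S : Set V) : Prop :=
  (∃ v ∈ S, ¬IsCutVertex G v ∧ v ∈ A) ∧ (∃ v ∈ S, ¬IsCutVertex G v ∧ v ∈ B)

/-- A legal pair: two distinct pendant blocks, not both of type A and not both of type B. -/
def LegalPair (G : SimpleGraph V) (A B : Set V) (S T : Set V) : Prop :=
  IsPendantBlock G S ∧ IsPendantBlock G T ∧ S ≠ T ∧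
  ¬(TypeOnly G A S ∧ TypeOnly G A T) ∧ ¬(TypeOnly G B S ∧ TypeOnly G B T)

/-- A legal edge: a vertex pair in `A × B` that is not an edge of `G`. -/
def LegalEdge (G : SimpleGraph V) (A B : Set V) (a b : V) : Prop :=
  a ∈ A ∧ b ∈ B ∧ ¬G.Adj a b

/-- A binding edge for a legal pair: a legal edge joining two noncut vertices,
one from each block of the pair. -/
def BindingEdge (G : SimpleGraph V) (A B : Set V) (S T : Set V) (a b : V) : Prop :=
  LegalEdge G A B a b ∧
  ((a ∈ S ∧ ¬IsCutVertex G a ∧ b ∈ T ∧ ¬IsCutVertex G b) ∨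
   (a ∈ T ∧ ¬IsCutVertex G a ∧ b ∈ S ∧ ¬IsCutVertex G b))

/-- A legal matching of a set `Λ'` of pendant blocks: a set of legal pairs between elements
of `Λ'` such that each element of `Λ'` belongs to at most one pair. -/
def IsLegalMatching (G : SimpleGraph V) (A B : Set V) (Λ' : Set (Set V))
    (N : Set (Set V × Set V)) : Prop :=
  (∀ q ∈ N, q.1 ∈ Λ' ∧ q.2 ∈ Λ' ∧ LegalPair G A B q.1 q.2) ∧
  (∀ q ∈ N, ∀ q' ∈ N, q ≠ q' →
    ({q.1, q.2} ∩ {q'.1, q'.2} : Set (Set V)) = ∅)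

/-- M(Λ'): the maximum cardinality of a legal matching of `Λ'`. -/
def maxMatching (G : SimpleGraph V) (A B : Set V) (Λ' : Set (Set V)) : ℕ :=
  sSup {k | ∃ N, IsLegalMatching G A B Λ' N ∧ N.ncard = k}

/-- R(Λ') = |Λ'| − 2·M(Λ'). -/
def Rnum (G : SimpleGraph V) (A B : Set V) (Λ' : Set (Set V)) : ℕ :=
  Λ'.ncard - 2 * maxMatching G A B Λ'

/-- A graph is componentwise biconnected if every connected component is a block. -/
def ComponentwiseBiconnected (G : SimpleGraph V) : Prop :=
  ∀ c : G.ConnectedComponent, IsBlock G c.supp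

/-- D(G,u): the number of connected components of X − {u}, where X is the
connected component of G containing u. -/
def Dnum (G : SimpleGraph V) (u : V) : ℕ :=
  Nat.card ((G.induce {v | G.Reachable u v ∧ v ≠ u}).ConnectedComponent)

/-- C(G): the number of connected components of G that are not blocks. -/
def Cnum (G : SimpleGraph V) : ℕ :=
  Nat.card {c : G.ConnectedComponent // ¬IsBlock G c.supp}

/-- η(G) = max{ max_u D(G,u) + C(G) − 2, M(Λ(G)) + R(Λ(G)) }. -/
def eta (G : SimpleGraph V) (A B : Set V) : ℕ :=
  max ((⨆ u : V, Dnum G u) + Cnum G - 2)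
      (maxMatching G A B (pendantBlocks G) + Rnum G A B (pendantBlocks G))

/-- A biconnector: a set of legal edges whose addition makes `G` componentwise biconnected. -/
def IsBiconnector (G : SimpleGraph V) (A B : Set V) (L : Set (Sym2 V)) : Prop :=
  (∀ e ∈ L, ∃ a b : V, e = s(a, b) ∧ LegalEdge G A B a b) ∧
  ComponentwiseBiconnected (G ⊔ SimpleGraph.fromEdgeSet L)

/-- B(G): the minimum number of edges of a biconnector of `G`. -/
def Bnum (G : SimpleGraph V) (A B : Set V) : ℕ :=
  sInf {k | ∃ L, IsBiconnector G A B L ∧ L.ncard = k}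

/-- A connected component is an isolated edge. -/
def IsIsolatedEdgeComp (G : SimpleGraph V) (c : G.ConnectedComponent) : Prop :=
  ∃ u v : V, G.Adj u v ∧ c.supp = {u, v}

/-- C1(G): the number of components that are neither isolated edges nor blocks. -/
def C1num (G : SimpleGraph V) : ℕ :=
  Nat.card {c : G.ConnectedComponent // ¬IsIsolatedEdgeComp G c ∧ ¬IsBlock G c.supp}

/-- C2(G): the number of isolated-edge components. -/
def C2num (G : SimpleGraph V) : ℕ :=
  Nat.card {c : G.ConnectedComponent // IsIsolatedEdgeComp G c}

/-- C3(G): the number of components that are nonsingular blocks. -/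
def C3num (G : SimpleGraph V) : ℕ :=
  Nat.card {c : G.ConnectedComponent // IsBlock G c.supp ∧ 1 < c.supp.ncard}

/-- A cut vertex `u` is critical if D(G,u) − 1 = M(Λ(G)) + R(Λ(G)). -/
def Critical (G : SimpleGraph V) (A B : Set V) (u : V) : Prop :=
  IsCutVertex G u ∧
    Dnum G u - 1 = maxMatching G A B (pendantBlocks G) + Rnum G A B (pendantBlocks G)

/-- A cut vertex `u` is massive if D(G,u) − 1 > M(Λ(G)) + R(Λ(G)). -/
def Massive (G : SimpleGraph V) (A B : Set V) (u : V) : Prop :=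
  IsCutVertex G u ∧
    maxMatching G A B (pendantBlocks G) + Rnum G A B (pendantBlocks G) < Dnum G u - 1

/-- Vertices of the block tree: blocks (b-vertices), cut vertices and cut edges (c-vertices). -/
inductive BTV (V : Type*) where
  | blk : Set V → BTV V
  | cv : V → BTV V
  | ce : Sym2 V → BTV V

/-- Valid vertices of the block tree of `G`: nonsingular blocks and singular pendant blocks
(b-vertices), together with cut vertices and cut edges (c-vertices). -/
def IsBTVert (G : SimpleGraph V) : BTV V → Prop
  | .blk S => IsBlock G S ∧ (1 < S.ncard ∨ ∃ v, S = {v} ∧ (G.neighborSet v).ncard = 1)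
  | .cv v => IsCutVertex G v
  | .ce e => IsCutEdge G e

/-- Adjacency of the block tree: a nonsingular block is joined to each cut vertex in it,
a cut vertex to each cut edge incident to it, and a cut edge to each singular (pendant)
block containing one of its endpoints. -/
def btAdj (G : SimpleGraph V) : BTV V → BTV V → Prop
  | .blk _, .blk _ => False
  | .blk S, .cv c => 1 < S.ncard ∧ c ∈ S
  | .blk S, .ce e => ∃ v, S = {v} ∧ v ∈ e
  | .cv c, .blk S => 1 < S.ncard ∧ c ∈ S
  | .cv _, .cv _ => False
  | .cv c, .ce e => c ∈ e
  | .ce e, .blk S => ∃ v, S = {v} ∧ v ∈ e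
  | .ce e, .cv c => c ∈ e
  | .ce _, .ce _ => False

/-- The vertex type of the block tree Ψ(G). -/
abbrev BTVert (G : SimpleGraph V) := {x : BTV V // IsBTVert G x}

/-- The block tree Ψ(G). -/
def blockTree (G : SimpleGraph V) : SimpleGraph (BTVert G) where
  Adj x y := btAdj G x.1 y.1
  symm := by
    constructor
    rintro ⟨x, hx⟩ ⟨y, hy⟩ h
    cases x <;> cases y <;> simp_all [btAdj]
  loopless := by
    constructor
    rintro ⟨x, hx⟩ h
    cases x <;> simp_all [btAdj]

/-- Degree of a vertex of the block tree. -/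
def btDeg (G : SimpleGraph V) (x : BTVert G) : ℕ :=
  Nat.card ((blockTree G).neighborSet x)

/-- A path is branchless if all its internal vertices have degree two. -/
def Branchless {W : Type*} (T : SimpleGraph W) {x y : W} (p : T.Walk x y) : Prop :=
  p.IsPath ∧ ∀ z ∈ p.support, z ≠ x → z ≠ y → Nat.card (T.neighborSet z) = 2

/-- A leaf clings to a vertex `v` if there is a branchless path between it and `v`. -/
def Clings {W : Type*} (T : SimpleGraph W) (l v : W) : Prop :=
  ∃ p : T.Walk l v, Branchless T p


/-! Every pendant block has a noncut vertex (a vertex of degree one is never a cut vertex), so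
when `A ∪ B` partitions the vertices each pendant block has exactly one of the three types.
A legal matching uses at most `n_A + n_B + n_AB` blocks, and each of its pairs contains a block
not of type B, and one not of type A; hence
`M ≤ min (n_A + n_AB) (n_B + n_AB) ⌊(n_A + n_B + n_AB) / 2⌋`. Pairing A with B, then the surplus
with AB, then AB with AB attains this bound, which equals `α + β + γ`. -/

theorem ncard_sep_sdiff_singleton_add_one {α : Type*} {p : α → Prop} {s : Set α} {a : α}
    (ha : a ∈ s) (hpa : p a) (hs : s.Finite := by toFinite_tac) :
    {x ∈ s \ {a} | p x}.ncard + 1 = {x ∈ s | p x}.ncard := by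
  rw [← Set.ncard_sdiff_singleton_add_one (show a ∈ {x ∈ s | p x} from ⟨ha, hpa⟩) (hs.sep p)]
  congr 2
  ext x
  simp only [Set.mem_ofPred_eq, Set.mem_sdiff, Set.mem_singleton_iff]
  tauto

theorem sep_sdiff_singleton_of_not {α : Type*} {p : α → Prop} {s : Set α} {a : α}
    (hpa : ¬p a) : {x ∈ s \ {a} | p x} = {x ∈ s | p x} := by
  ext x
  simp only [Set.mem_ofPred_eq, Set.mem_sdiff, Set.mem_singleton_iff]
  exact ⟨fun h => ⟨h.1.1, h.2⟩, fun h => ⟨⟨h.1, by rintro rfl; exact hpa h.2⟩, h.2⟩⟩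

section Leaves

variable {G : SimpleGraph V}

theorem reachable_induce_ne_of_subsingleton_neighborSet {v x y : V}
    (hv : (G.neighborSet v).Subsingleton) (hx : x ≠ v) (hy : y ≠ v) (h : G.Reachable x y) :
    (G.induce {w | w ≠ v}).Reachable ⟨x, hx⟩ ⟨y, hy⟩ := by
  obtain ⟨p, hp⟩ := h.exists_isPath
  exact ⟨p.induce _ fun w hw (hwv : w = v) =>
    hp.isTrail.not_mem_support_of_subsingleton_neighborSet hx.symm hy.symm hv (hwv ▸ hw)⟩

theorem not_isCutVertex_of_subsingleton_neighborSet [Finite V] {v : V}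
    (hv : (G.neighborSet v).Subsingleton) : ¬IsCutVertex G v := by
  have hinj : Function.Injective
      (ConnectedComponent.map (Embedding.induce (G := G) {x | x ≠ v}).toHom) := by
    refine ConnectedComponent.ind₂ fun x y hxy => ?_
    rw [ConnectedComponent.map_mk, ConnectedComponent.map_mk, ConnectedComponent.eq] at hxy
    exact ConnectedComponent.eq.mpr
      (reachable_induce_ne_of_subsingleton_neighborSet hv x.2 y.2 hxy)
  exact (Nat.card_le_card_of_injective _ hinj).not_gt

end Leaves

section Types

variable {G : SimpleGraph V} {A B P Q S : Set V}

theorem IsPendantBlock.exists_not_isCutVertex [Finite V] (hS : IsPendantBlock G S) :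
    ∃ v ∈ S, ¬IsCutVertex G v := by
  rcases hS.2 with ⟨v, rfl, hdeg⟩ | ⟨hcard, c, -, hc⟩
  · obtain ⟨u, hu⟩ := Set.ncard_eq_one.mp hdeg
    exact ⟨v, rfl, not_isCutVertex_of_subsingleton_neighborSet (hu ▸ Set.subsingleton_singleton)⟩
  · obtain ⟨x, y, hx, hy, hxy⟩ := (Set.one_lt_ncard_iff S.toFinite).mp hcard
    by_cases hxc : x = c
    · exact ⟨y, hy, fun hcut => hxy (hxc.trans (hc y ⟨hy, hcut⟩).symm)⟩
    · exact ⟨x, hx, fun hcut => hxc (hc x ⟨hx, hcut⟩)⟩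

theorem IsPendantBlock.not_typeOnly_of_disjoint [Finite V] (hS : IsPendantBlock G S)
    (hPQ : Disjoint P Q) (hP : TypeOnly G P S) : ¬TypeOnly G Q S := fun hQ => by
  obtain ⟨v, hv, hcut⟩ := hS.exists_not_isCutVertex
  exact hPQ.ne_of_mem (hP v hv hcut) (hQ v hv hcut) rfl

theorem TypeAB.not_typeOnly_left (hd : Disjoint A B) (h : TypeAB G A B S) :
    ¬TypeOnly G A S := fun hA => by
  obtain ⟨v, hv, hcut, hvB⟩ := h.2
  exact hd.ne_of_mem (hA v hv hcut) hvB rfl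

theorem TypeAB.not_typeOnly_right (hd : Disjoint A B) (h : TypeAB G A B S) :
    ¬TypeOnly G B S := fun hB => by
  obtain ⟨v, hv, hcut, hvA⟩ := h.1
  exact hd.ne_of_mem hvA (hB v hv hcut) rfl

theorem typeAB_comm : TypeAB G B A = TypeAB G A B :=
  funext fun _ => propext and_comm

theorem typeOnly_or_typeOnly_or_typeAB (hcov : A ∪ B = Set.univ) (S : Set V) :
    TypeOnly G A S ∨ TypeOnly G B S ∨ TypeAB G A B S := by
  have hmem : ∀ v, v ∈ A ∨ v ∈ B := fun v => (Set.ext_iff.mp hcov v).mpr trivial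
  by_cases hA : TypeOnly G A S
  · exact Or.inl hA
  by_cases hB : TypeOnly G B S
  · exact Or.inr (Or.inl hB)
  simp only [TypeOnly, not_forall, exists_prop] at hA hB
  obtain ⟨v, hv, hvcut, hvA⟩ := hA
  obtain ⟨w, hw, hwcut, hwB⟩ := hB
  exact Or.inr (Or.inr
    ⟨⟨w, hw, hwcut, (hmem w).resolve_right hwB⟩, ⟨v, hv, hvcut, (hmem v).resolve_left hvA⟩⟩)

theorem ncard_eq_of_subset_pendantBlocks [Finite V] (hd : Disjoint A B)
    (hcov : A ∪ B = Set.univ) {Λ : Set (Set V)} (hΛ : Λ ⊆ pendantBlocks G) :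
    Λ.ncard = {S ∈ Λ | TypeOnly G A S}.ncard + {S ∈ Λ | TypeOnly G B S}.ncard +
      {S ∈ Λ | TypeAB G A B S}.ncard := by
  have hunion : Λ = {S ∈ Λ | TypeOnly G A S} ∪ {S ∈ Λ | TypeOnly G B S} ∪
      {S ∈ Λ | TypeAB G A B S} := by
    ext S
    refine ⟨fun hS => ?_, by rintro ((⟨hS, -⟩ | ⟨hS, -⟩) | ⟨hS, -⟩) <;> exact hS⟩
    rcases typeOnly_or_typeOnly_or_typeAB hcov S with h | h | h
    exacts [Or.inl (Or.inl ⟨hS, h⟩), Or.inl (Or.inr ⟨hS, h⟩), Or.inr ⟨hS, h⟩]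
  have hAB : Disjoint {S ∈ Λ | TypeOnly G A S} {S ∈ Λ | TypeOnly G B S} :=
    Set.disjoint_left.mpr fun S hA hB => (hΛ hA.1).not_typeOnly_of_disjoint hd hA.2 hB.2
  have hrest : Disjoint ({S ∈ Λ | TypeOnly G A S} ∪ {S ∈ Λ | TypeOnly G B S})
      {S ∈ Λ | TypeAB G A B S} :=
    Set.disjoint_union_left.mpr
      ⟨Set.disjoint_left.mpr fun S hA hAB => hAB.2.not_typeOnly_left hd hA.2,
        Set.disjoint_left.mpr fun S hB hAB => hAB.2.not_typeOnly_right hd hB.2⟩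
  rw [← Set.ncard_union_eq hAB, ← Set.ncard_union_eq hrest, ← hunion]

theorem legalPair_of_typeOnly [Finite V] (hd : Disjoint A B) {T : Set V}
    (hS : IsPendantBlock G S) (hT : IsPendantBlock G T) (hSA : TypeOnly G A S)
    (hTB : TypeOnly G B T) : LegalPair G A B S T :=
  ⟨hS, hT, by rintro rfl; exact hS.not_typeOnly_of_disjoint hd hSA hTB,
    fun h => hT.not_typeOnly_of_disjoint hd h.2 hTB,
    fun h => hS.not_typeOnly_of_disjoint hd hSA h.1⟩

theorem legalPair_of_typeAB (hd : Disjoint A B) {T : Set V} (hS : IsPendantBlock G S)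
    (hT : IsPendantBlock G T) (hST : S ≠ T) (hTAB : TypeAB G A B T) : LegalPair G A B S T :=
  ⟨hS, hT, hST, fun h => hTAB.not_typeOnly_left hd h.2,
    fun h => hTAB.not_typeOnly_right hd h.2⟩

theorem ncard_sep_sdiff_of_typeOnly_left [Finite V] (hd : Disjoint A B) {Λ : Set (Set V)}
    (hΛ : Λ ⊆ pendantBlocks G) (hS : S ∈ Λ) (hA : TypeOnly G A S) :
    {T ∈ Λ \ {S} | TypeOnly G A T}.ncard + 1 = {T ∈ Λ | TypeOnly G A T}.ncard ∧
      {T ∈ Λ \ {S} | TypeOnly G B T}.ncard = {T ∈ Λ | TypeOnly G B T}.ncard ∧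
      {T ∈ Λ \ {S} | TypeAB G A B T}.ncard = {T ∈ Λ | TypeAB G A B T}.ncard :=
  ⟨ncard_sep_sdiff_singleton_add_one hS hA,
    by rw [sep_sdiff_singleton_of_not ((hΛ hS).not_typeOnly_of_disjoint hd hA)],
    by rw [sep_sdiff_singleton_of_not fun h => h.not_typeOnly_left hd hA]⟩

theorem ncard_sep_sdiff_of_typeOnly_right [Finite V] (hd : Disjoint A B) {Λ : Set (Set V)}
    (hΛ : Λ ⊆ pendantBlocks G) (hS : S ∈ Λ) (hB : TypeOnly G B S) :
    {T ∈ Λ \ {S} | TypeOnly G A T}.ncard = {T ∈ Λ | TypeOnly G A T}.ncard ∧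
      {T ∈ Λ \ {S} | TypeOnly G B T}.ncard + 1 = {T ∈ Λ | TypeOnly G B T}.ncard ∧
      {T ∈ Λ \ {S} | TypeAB G A B T}.ncard = {T ∈ Λ | TypeAB G A B T}.ncard :=
  ⟨by rw [sep_sdiff_singleton_of_not ((hΛ hS).not_typeOnly_of_disjoint hd.symm hB)],
    ncard_sep_sdiff_singleton_add_one hS hB,
    by rw [sep_sdiff_singleton_of_not fun h => h.not_typeOnly_right hd hB]⟩

theorem ncard_sep_sdiff_of_typeAB [Finite V] (hd : Disjoint A B) {Λ : Set (Set V)}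
    (hS : S ∈ Λ) (hAB : TypeAB G A B S) :
    {T ∈ Λ \ {S} | TypeOnly G A T}.ncard = {T ∈ Λ | TypeOnly G A T}.ncard ∧
      {T ∈ Λ \ {S} | TypeOnly G B T}.ncard = {T ∈ Λ | TypeOnly G B T}.ncard ∧
      {T ∈ Λ \ {S} | TypeAB G A B T}.ncard + 1 = {T ∈ Λ | TypeAB G A B T}.ncard :=
  ⟨by rw [sep_sdiff_singleton_of_not (hAB.not_typeOnly_left hd)],
    by rw [sep_sdiff_singleton_of_not (hAB.not_typeOnly_right hd)],
    ncard_sep_sdiff_singleton_add_one hS hAB⟩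

end Types

section Matchings

variable {G : SimpleGraph V} {A B : Set V} {Λ : Set (Set V)} {N : Set (Set V × Set V)}

theorem IsLegalMatching.symm (hN : IsLegalMatching G A B Λ N) : IsLegalMatching G B A Λ N :=
  ⟨fun q hq =>
    let ⟨h1, h2, hS, hT, hne, hA, hB⟩ := hN.1 q hq
    ⟨h1, h2, hS, hT, hne, hB, hA⟩, hN.2⟩

theorem IsLegalMatching.eq_of_mem (hN : IsLegalMatching G A B Λ N) {q q' : Set V × Set V}
    (hq : q ∈ N) (hq' : q' ∈ N) {S : Set V} (hS : S ∈ ({q.1, q.2} : Set (Set V)))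
    (hS' : S ∈ ({q'.1, q'.2} : Set (Set V))) : q = q' := by
  by_contra hne
  exact Set.eq_empty_iff_forall_notMem.mp (hN.2 q hq q' hq' hne) S ⟨hS, hS'⟩

theorem IsLegalMatching.two_mul_ncard_le [Finite V] (hN : IsLegalMatching G A B Λ N) :
    2 * N.ncard ≤ Λ.ncard := by
  have hfst : (Prod.fst '' N).ncard = N.ncard :=
    Set.InjOn.ncard_image fun q hq q' hq' h => hN.eq_of_mem hq hq' (Or.inl rfl) (Or.inl h)
  have hsnd : (Prod.snd '' N).ncard = N.ncard :=
    Set.InjOn.ncard_image fun q hq q' hq' h => hN.eq_of_mem hq hq' (Or.inr rfl) (Or.inr h)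
  have hdisj : Disjoint (Prod.fst '' N) (Prod.snd '' N) := by
    refine Set.disjoint_left.mpr ?_
    rintro _ ⟨q, hq, rfl⟩ ⟨q', hq', h⟩
    obtain rfl := hN.eq_of_mem hq hq' (Or.inl rfl) (Or.inr h.symm)
    exact (hN.1 q hq).2.2.2.2.1 h.symm
  have hsub : Prod.fst '' N ∪ Prod.snd '' N ⊆ Λ := by
    rintro _ (⟨q, hq, rfl⟩ | ⟨q, hq, rfl⟩)
    exacts [(hN.1 q hq).1, (hN.1 q hq).2.1]
  calc 2 * N.ncard = (Prod.fst '' N ∪ Prod.snd '' N).ncard := by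
        rw [Set.ncard_union_eq hdisj, hfst, hsnd, two_mul]
    _ ≤ Λ.ncard := Set.ncard_le_ncard hsub

theorem IsLegalMatching.ncard_le_ncard_inter [Finite V] (hN : IsLegalMatching G A B Λ N)
    {T : Set (Set V)} (hT : ∀ q ∈ N, q.1 ∈ T ∨ q.2 ∈ T) : N.ncard ≤ (Λ ∩ T).ncard := by
  classical
  refine Set.ncard_le_ncard_of_injOn (fun q => if q.1 ∈ T then q.1 else q.2) ?_ ?_
  · intro q hq
    obtain ⟨h1, h2, -⟩ := hN.1 q hq
    split_ifs with h
    exacts [⟨h1, h⟩, ⟨h2, (hT q hq).resolve_left h⟩]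
  · intro q hq q' hq' h
    refine hN.eq_of_mem hq hq' (S := if q.1 ∈ T then q.1 else q.2) ?_ ?_
    · split_ifs
      exacts [Or.inl rfl, Or.inr rfl]
    · dsimp only at h
      rw [h]
      split_ifs
      exacts [Or.inl rfl, Or.inr rfl]

theorem IsLegalMatching.ncard_le_typeOnly_add_typeAB [Finite V] (hcov : A ∪ B = Set.univ)
    (hN : IsLegalMatching G A B Λ N) :
    N.ncard ≤ {S ∈ Λ | TypeOnly G A S}.ncard + {S ∈ Λ | TypeAB G A B S}.ncard := by
  have hmeet : ∀ q ∈ N, q.1 ∈ {S | TypeOnly G A S ∨ TypeAB G A B S} ∨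
      q.2 ∈ {S | TypeOnly G A S ∨ TypeAB G A B S} := by
    intro q hq
    have hB := (hN.1 q hq).2.2.2.2.2.2
    have h1 := typeOnly_or_typeOnly_or_typeAB (G := G) hcov q.1
    have h2 := typeOnly_or_typeOnly_or_typeAB (G := G) hcov q.2
    simp only [Set.mem_ofPred_eq]
    tauto
  refine (hN.ncard_le_ncard_inter hmeet).trans ((Set.ncard_le_ncard ?_).trans
    (Set.ncard_union_le {S ∈ Λ | TypeOnly G A S} {S ∈ Λ | TypeAB G A B S}))
  rintro S ⟨hS, h | h⟩
  exacts [Or.inl ⟨hS, h⟩, Or.inr ⟨hS, h⟩]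

theorem IsLegalMatching.insert_pair [Finite V] {x y : Set V}
    (hN : IsLegalMatching G A B ((Λ \ {x}) \ {y}) N) (hx : x ∈ Λ) (hy : y ∈ Λ)
    (hxy : LegalPair G A B x y) :
    IsLegalMatching G A B Λ (insert (x, y) N) ∧ (insert (x, y) N).ncard = N.ncard + 1 := by
  have hfresh : ∀ q ∈ N, ({x, y} ∩ {q.1, q.2} : Set (Set V)) = ∅ := by
    intro q hq
    obtain ⟨⟨⟨-, h1x⟩, h1y⟩, ⟨⟨-, h2x⟩, h2y⟩, -⟩ := hN.1 q hq
    ext S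
    simp only [Set.mem_inter_iff, Set.mem_insert_iff, Set.mem_singleton_iff] at h1x h1y h2x h2y ⊢
    grind
  refine ⟨⟨?_, ?_⟩, Set.ncard_insert_of_notMem fun h => (hN.1 _ h).1.1.2 rfl⟩
  · rintro q (rfl | hq)
    · exact ⟨hx, hy, hxy⟩
    · obtain ⟨h1, h2, h⟩ := hN.1 q hq
      exact ⟨h1.1.1, h2.1.1, h⟩
  · rintro q (rfl | hq) q' (rfl | hq') hne
    · exact absurd rfl hne
    · exact hfresh q' hq'
    · exact Set.inter_comm _ _ ▸ hfresh q hq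
    · exact hN.2 q hq q' hq' hne

end Matchings

/-- The size of a largest legal matching among `a` blocks of type A, `b` of type B and `c` of
type AB. -/
def maxLegalPairs (a b c : ℕ) : ℕ :=
  min (min (a + c) (b + c)) ((a + b + c) / 2)

theorem maxLegalPairs_eq (a b c : ℕ) :
    maxLegalPairs a b c =
      min a b + min (max a b - min a b) c + (c - min (max a b - min a b) c) / 2 := by
  unfold maxLegalPairs
  omega

section Construction

variable {G : SimpleGraph V} {A B : Set V}

theorem IsLegalMatching.ncard_le_maxLegalPairs [Finite V] (hd : Disjoint A B)
    (hcov : A ∪ B = Set.univ) {Λ : Set (Set V)} (hΛ : Λ ⊆ pendantBlocks G)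
    {N : Set (Set V × Set V)} (hN : IsLegalMatching G A B Λ N) :
    N.ncard ≤ maxLegalPairs {S ∈ Λ | TypeOnly G A S}.ncard {S ∈ Λ | TypeOnly G B S}.ncard
      {S ∈ Λ | TypeAB G A B S}.ncard := by
  have htwo := hN.two_mul_ncard_le
  have hA := hN.ncard_le_typeOnly_add_typeAB hcov
  have hB := hN.symm.ncard_le_typeOnly_add_typeAB (Set.union_comm A B ▸ hcov)
  rw [ncard_eq_of_subset_pendantBlocks hd hcov hΛ] at htwo
  rw [typeAB_comm] at hB
  unfold maxLegalPairs
  omega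

theorem maxLegalPairs_eq_zero_or_exists_legalPair [Finite V] (hd : Disjoint A B)
    {Λ : Set (Set V)} (hΛ : Λ ⊆ pendantBlocks G) :
    maxLegalPairs {S ∈ Λ | TypeOnly G A S}.ncard {S ∈ Λ | TypeOnly G B S}.ncard
        {S ∈ Λ | TypeAB G A B S}.ncard = 0 ∨
      ∃ x ∈ Λ, ∃ y ∈ Λ \ {x}, LegalPair G A B x y ∧
        maxLegalPairs {S ∈ Λ | TypeOnly G A S}.ncard {S ∈ Λ | TypeOnly G B S}.ncard
            {S ∈ Λ | TypeAB G A B S}.ncard =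
          maxLegalPairs {S ∈ (Λ \ {x}) \ {y} | TypeOnly G A S}.ncard
            {S ∈ (Λ \ {x}) \ {y} | TypeOnly G B S}.ncard
            {S ∈ (Λ \ {x}) \ {y} | TypeAB G A B S}.ncard + 1 := by
  set a := {S ∈ Λ | TypeOnly G A S}.ncard
  set b := {S ∈ Λ | TypeOnly G B S}.ncard
  set c := {S ∈ Λ | TypeAB G A B S}.ncard
  by_cases hab : 0 < a ∧ 0 < b
  · obtain ⟨x, hx, hxA⟩ := Set.nonempty_of_ncard_ne_zero hab.1.ne'
    obtain ⟨y, hy, hyB⟩ := Set.nonempty_of_ncard_ne_zero hab.2.ne'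
    have hxy := legalPair_of_typeOnly hd (hΛ hx) (hΛ hy) hxA hyB
    have hy' : y ∈ Λ \ {x} := ⟨hy, hxy.2.2.1.symm⟩
    obtain ⟨h1, h2, h3⟩ := ncard_sep_sdiff_of_typeOnly_left hd hΛ hx hxA
    obtain ⟨h4, h5, h6⟩ := ncard_sep_sdiff_of_typeOnly_right hd
      (Set.sdiff_subset.trans hΛ) hy' hyB
    exact Or.inr ⟨x, hx, y, hy', hxy, by unfold maxLegalPairs; omega⟩
  by_cases hac : 0 < a ∧ 0 < c
  · obtain ⟨x, hx, hxA⟩ := Set.nonempty_of_ncard_ne_zero hac.1.ne'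
    obtain ⟨y, hy, hyAB⟩ := Set.nonempty_of_ncard_ne_zero hac.2.ne'
    have hy' : y ∈ Λ \ {x} := ⟨hy, by rintro rfl; exact hyAB.not_typeOnly_left hd hxA⟩
    obtain ⟨h1, h2, h3⟩ := ncard_sep_sdiff_of_typeOnly_left hd hΛ hx hxA
    obtain ⟨h4, h5, h6⟩ := ncard_sep_sdiff_of_typeAB hd hy' hyAB
    exact Or.inr ⟨x, hx, y, hy', legalPair_of_typeAB hd (hΛ hx) (hΛ hy) (Ne.symm hy'.2) hyAB,
      by unfold maxLegalPairs; omega⟩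
  by_cases hbc : 0 < b ∧ 0 < c
  · obtain ⟨x, hx, hxB⟩ := Set.nonempty_of_ncard_ne_zero hbc.1.ne'
    obtain ⟨y, hy, hyAB⟩ := Set.nonempty_of_ncard_ne_zero hbc.2.ne'
    have hy' : y ∈ Λ \ {x} := ⟨hy, by rintro rfl; exact hyAB.not_typeOnly_right hd hxB⟩
    obtain ⟨h1, h2, h3⟩ := ncard_sep_sdiff_of_typeOnly_right hd hΛ hx hxB
    obtain ⟨h4, h5, h6⟩ := ncard_sep_sdiff_of_typeAB hd hy' hyAB
    exact Or.inr ⟨x, hx, y, hy', legalPair_of_typeAB hd (hΛ hx) (hΛ hy) (Ne.symm hy'.2) hyAB,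
      by unfold maxLegalPairs; omega⟩
  by_cases hcc : 1 < c
  · obtain ⟨x, y, ⟨hx, hxAB⟩, ⟨hy, hyAB⟩, hxy⟩ := (Set.one_lt_ncard_iff).mp hcc
    have hy' : y ∈ Λ \ {x} := ⟨hy, hxy.symm⟩
    obtain ⟨h1, h2, h3⟩ := ncard_sep_sdiff_of_typeAB hd hx hxAB
    obtain ⟨h4, h5, h6⟩ := ncard_sep_sdiff_of_typeAB hd hy' hyAB
    exact Or.inr ⟨x, hx, y, hy', legalPair_of_typeAB hd (hΛ hx) (hΛ hy) hxy hyAB,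
      by unfold maxLegalPairs; omega⟩
  exact Or.inl (by unfold maxLegalPairs; omega)

theorem exists_isLegalMatching_ncard_eq_maxLegalPairs [Finite V] (hd : Disjoint A B)
    (Λ : Set (Set V)) (hΛ : Λ ⊆ pendantBlocks G) :
    ∃ N, IsLegalMatching G A B Λ N ∧
      N.ncard = maxLegalPairs {S ∈ Λ | TypeOnly G A S}.ncard {S ∈ Λ | TypeOnly G B S}.ncard
        {S ∈ Λ | TypeAB G A B S}.ncard := by
  induction hn : Λ.ncard using Nat.strong_induction_on generalizing Λ with
  | _ n ih =>
  rcases maxLegalPairs_eq_zero_or_exists_legalPair hd hΛ with h0 | ⟨x, hx, y, hy, hxy, hsucc⟩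
  · exact ⟨∅, ⟨fun q hq => hq.elim, fun q hq => hq.elim⟩, by rw [Set.ncard_empty, h0]⟩
  have hlt : ((Λ \ {x}) \ {y}).ncard < n :=
    hn ▸ (Set.ncard_sdiff_singleton_lt_of_mem hy).trans_le (Set.ncard_sdiff_singleton_le Λ x)
  obtain ⟨N, hN, hcard⟩ :=
    ih _ hlt _ (Set.sdiff_subset.trans (Set.sdiff_subset.trans hΛ)) rfl
  obtain ⟨hN', hcard'⟩ := hN.insert_pair hx hy.1 hxy
  exact ⟨_, hN', by rw [hcard', hcard, hsucc]⟩

end Construction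

theorem maxMatching_eq_maxLegalPairs [Finite V] {G : SimpleGraph V} {A B : Set V}
    (hd : Disjoint A B) (hcov : A ∪ B = Set.univ) {Λ : Set (Set V)} (hΛ : Λ ⊆ pendantBlocks G) :
    maxMatching G A B Λ = maxLegalPairs {S ∈ Λ | TypeOnly G A S}.ncard
      {S ∈ Λ | TypeOnly G B S}.ncard {S ∈ Λ | TypeAB G A B S}.ncard := by
  obtain ⟨N, hN, hcard⟩ := exists_isLegalMatching_ncard_eq_maxLegalPairs hd Λ hΛ
  exact IsGreatest.csSup_eq
    ⟨⟨N, hN, hcard⟩, by rintro _ ⟨N, hN, rfl⟩; exact hN.ncard_le_maxLegalPairs hd hcov hΛ⟩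

theorem stmt_3_general [Fintype V] (G : SimpleGraph V) (A B : Set V)
    (hdisj : Disjoint A B) (hcov : A ∪ B = Set.univ) :
    let nA := {S : Set V | IsPendantBlock G S ∧ TypeOnly G A S}.ncard
    let nB := {S : Set V | IsPendantBlock G S ∧ TypeOnly G B S}.ncard
    let nAB := {S : Set V | IsPendantBlock G S ∧ TypeAB G A B S}.ncard
    let α := min nA nB
    let β := min (max nA nB - min nA nB) nAB
    let γ := (nAB - β) / 2
    Rnum G A B (pendantBlocks G) = nA + nB + nAB - 2 * maxMatching G A B (pendantBlocks G) ∧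
    maxMatching G A B (pendantBlocks G) = α + β + γ := by
  intro nA nB nAB α β γ
  have hcard : (pendantBlocks G).ncard = nA + nB + nAB :=
    ncard_eq_of_subset_pendantBlocks hdisj hcov subset_rfl
  have hM : maxMatching G A B (pendantBlocks G) = maxLegalPairs nA nB nAB :=
    maxMatching_eq_maxLegalPairs hdisj hcov subset_rfl
  exact ⟨by rw [Rnum, hcard], hM.trans (maxLegalPairs_eq nA nB nAB)⟩

theorem stmt_3 [Fintype V] (G : SimpleGraph V) (A B : Set V)
    (hdisj : Disjoint A B) (hcov : A ∪ B = Set.univ)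
    (hbip : ∀ u v : V, G.Adj u v → (u ∈ A ∧ v ∈ B) ∨ (u ∈ B ∧ v ∈ A)) :
    let nA := {S : Set V | IsPendantBlock G S ∧ TypeOnly G A S}.ncard
    let nB := {S : Set V | IsPendantBlock G S ∧ TypeOnly G B S}.ncard
    let nAB := {S : Set V | IsPendantBlock G S ∧ TypeAB G A B S}.ncard
    let α := min nA nB
    let β := min (max nA nB - min nA nB) nAB
    let γ := (nAB - β) / 2
    Rnum G A B (pendantBlocks G) = nA + nB + nAB - 2 * maxMatching G A B (pendantBlocks G) ∧
    maxMatching G A B (pendantBlocks G) = α + β + γ :=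
  stmt_3_general G A B hdisj hcov

end
end AugBic
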